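/- arXiv:1410.3879 — 5 statements merged into one kernel-verified Lean document; each statement's English description precedes it below -/
import Mathlib

section
/- The center of the category of commutative F_p-algebras is freely generated by Frobenius: if (P_A : A → A) is a family of F_p-algebra homomorphisms, one for each commutative F_p-algebra A, such that g ∘ P_A = P_B ∘ g for every F_p-algebra homomorphism g : A → B, then there exists n ≥ 0 such that P_A = Frob_A^n for all A. -/
open Polynomial

/-- `ULift` as an algebra equivalence. -/
def uliftAlgEquiv (R : Type*) (A : Type*) [CommSemiring R] [Semiring A] [Algebra R A] :
    ULift.{u} A ≃ₐ[R] A :=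
  { ULift.ringEquiv with commutes' := fun _ => rfl }

lemma coeff_aeval_X_mul_CX {R : Type*} [CommRing R] (f : R[X]) (i : ℕ) :
    (aeval (X * C X : Polynomial (Polynomial R)) f).coeff i = C (f.coeff i) * X ^ i := by
  induction f using Polynomial.induction_on' with
  | add q r hq hr => simp only [map_add, coeff_add, hq, hr, add_mul]
  | monomial n c =>
      have h1 : (algebraMap R (Polynomial (Polynomial R))) c * (X * C X) ^ n
          = C (C c * X ^ n) * X ^ n := by
        simp only [Polynomial.algebraMap_apply, Polynomial.algebraMap_eq, mul_pow, ← C_pow,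
          map_mul]
        ring
      rw [aeval_monomial, h1, coeff_mul_X_pow', coeff_monomial]
      rcases eq_or_ne n i with rfl | h
      · rw [if_pos rfl, if_pos le_rfl, Nat.sub_self, coeff_C_zero]
      · rw [if_neg h, map_zero, zero_mul]
        rcases le_or_gt n i with hle | hlt
        · rw [if_pos hle, coeff_C, if_neg (by omega)]
        · rw [if_neg (Nat.not_le_of_lt hlt)]

/-- The center of the category of commutative `𝔽_p`-algebras is freely generated by
Frobenius: any family of algebra endomorphisms natural in all algebra maps is a power
of Frobenius. -/
theorem stmt_2 (p : ℕ) [Fact p.Prime]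
    (P : ∀ (A : Type u) [CommRing A] [Algebra (ZMod p) A], A →ₐ[ZMod p] A)
    (hnat : ∀ (A B : Type u) [CommRing A] [CommRing B] [Algebra (ZMod p) A]
      [Algebra (ZMod p) B] (g : A →ₐ[ZMod p] B) (a : A), g (P A a) = P B (g a)) :
    ∃ n : ℕ, ∀ (A : Type u) [CommRing A] [Algebra (ZMod p) A] (a : A),
      P A a = a ^ p ^ n := by
  have hp : p.Prime := Fact.out
  -- the universal element
  let e : ULift.{u} (Polynomial (ZMod p)) ≃ₐ[ZMod p] Polynomial (ZMod p) :=
    uliftAlgEquiv (ZMod p) (Polynomial (ZMod p))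
  set f : Polynomial (ZMod p) := e (P (ULift.{u} (Polynomial (ZMod p))) (e.symm X)) with hf
  -- naturality forces `P A a = aeval a f`
  have hP : ∀ (A : Type u) [CommRing A] [Algebra (ZMod p) A] (a : A),
      P A a = aeval a f := by
    intro A _ _ a
    have h := hnat (ULift.{u} (Polynomial (ZMod p))) A
      ((Polynomial.aeval a).comp e.toAlgHom) (e.symm X)
    simpa [hf, ← Polynomial.aeval_algHom_apply] using h.symm
  -- transfer multiplicativity and additivity to small algebras
  have hkey : ∀ (B : Type) [CommRing B] [Algebra (ZMod p) B] (x y : B),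
      aeval (x * y) f = aeval x f * aeval y f ∧
      aeval (x + y) f = aeval x f + aeval y f := by
    intro B _ _ x y
    let eB : ULift.{u} B ≃ₐ[ZMod p] B := uliftAlgEquiv (ZMod p) B
    have h1 : ∀ z : ULift.{u} B, aeval (eB z) f = eB (aeval z f) := by
      intro z; exact (Polynomial.aeval_algHom_apply eB.toAlgHom z f)
    have hmul' := map_mul (P (ULift.{u} B)) (eB.symm x) (eB.symm y)
    have hadd' := map_add (P (ULift.{u} B)) (eB.symm x) (eB.symm y)
    rw [hP, hP, hP] at hmul' hadd'
    constructor
    · have := congrArg eB hmul'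
      rw [map_mul, ← h1, ← h1, ← h1] at this
      simpa using this
    · have := congrArg eB hadd'
      rw [map_add, ← h1, ← h1, ← h1] at this
      simpa using this
  -- f is nonzero
  have hf0 : f ≠ 0 := by
    intro h0
    have h1 := hP (ULift.{u} (ZMod p)) 1
    rw [map_one, h0, map_zero] at h1
    exact one_ne_zero h1
  set d := f.natDegree with hd
  have hcd : f.coeff d ≠ 0 := by
    rw [hd, ← Polynomial.leadingCoeff]
    exact Polynomial.leadingCoeff_ne_zero.mpr hf0
  -- multiplicativity in (ZMod p[X])[X] at X and C X
  have hmulB := (hkey (Polynomial (Polynomial (ZMod p))) X (C X)).1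
  -- compute aeval X f and aeval (C X) f
  have hCX : aeval (C X : Polynomial (Polynomial (ZMod p))) f = C f := by
    have := Polynomial.aeval_algHom_apply
      (Polynomial.CAlgHom (R := ZMod p) (A := Polynomial (ZMod p))) X f
    simpa [Polynomial.CAlgHom] using this
  have hXB : aeval (X : Polynomial (Polynomial (ZMod p))) f
      = f.map (C : ZMod p →+* Polynomial (ZMod p)) := by
    have := Polynomial.aeval_algHom_apply
      (Polynomial.mapAlgHom (Algebra.ofId (ZMod p) (Polynomial (ZMod p)))) X f
    simpa [Polynomial.coe_mapAlgHom, Polynomial.algebraMap_eq] using this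
  -- coefficient relations: C (f.coeff i) * X^i = C (f.coeff i) * f
  have hrel : ∀ i : ℕ, C (f.coeff i) * X ^ i = C (f.coeff i) * f := by
    intro i
    have h : (aeval (X * C X : Polynomial (Polynomial (ZMod p))) f).coeff i
        = (aeval (X : Polynomial (Polynomial (ZMod p))) f
            * aeval (C X : Polynomial (Polynomial (ZMod p))) f).coeff i := by
      rw [hmulB]
    rw [coeff_aeval_X_mul_CX, hXB, hCX, coeff_mul_C, coeff_map] at h
    exact h
  have hone : f.coeff d = 1 := by
    have h := congrArg (fun q => Polynomial.coeff q d) (hrel d)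
    simp only [coeff_C_mul, coeff_X_pow, eq_self_iff_true, if_true, mul_one] at h
    exact (mul_left_cancel₀ hcd (by rw [← h, mul_one])).symm
  have hzero : ∀ j, j ≠ d → f.coeff j = 0 := by
    intro j hj
    have h := congrArg (fun q => Polynomial.coeff q j) (hrel d)
    simp only [coeff_C_mul, coeff_X_pow, hone, one_mul] at h
    rw [if_neg hj] at h
    exact h.symm
  have hfX : f = X ^ d := by
    ext j
    rw [coeff_X_pow]
    rcases eq_or_ne j d with rfl | h
    · rw [if_pos rfl, hone]
    · rw [if_neg h, hzero j h]
  -- additivity gives (1+X)^d = 1 + X^d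
  have haddB := (hkey (Polynomial (Polynomial (ZMod p))) X (C X)).2
  rw [hfX] at haddB
  simp only [map_pow, aeval_X] at haddB
  have hpoly : (1 + X : Polynomial (ZMod p)) ^ d = 1 + X ^ d := by
    have h := congrArg (fun q => Polynomial.eval (1 : Polynomial (ZMod p)) q) haddB
    simpa only [eval_pow, eval_add, eval_X, eval_C, eval_one, one_pow] using h
  have hd0 : d ≠ 0 := by
    intro h0
    have h1 := hP (ULift.{u} (ZMod p)) 0
    rw [map_zero, hfX, h0, pow_zero, map_one] at h1
    exact zero_ne_one h1
  set n := d.factorization p with hn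
  refine ⟨n, ?_⟩
  have hdn : d = p ^ n := by
    by_contra hne
    set m := d / p ^ n with hm
    have hdm : p ^ n * m = d := Nat.ordProj_mul_ordCompl_eq_self d p
    have hpm : ¬ p ∣ m := Nat.not_dvd_ordCompl hp hd0
    have hm0 : m ≠ 0 := by
      intro h0; rw [h0, mul_zero] at hdm; exact hd0 hdm.symm
    have hm1 : m ≠ 1 := by
      intro h1; rw [h1, mul_one] at hdm; exact hne hdm.symm
    have hppos : 0 < p ^ n := Nat.pow_pos hp.pos
    have hlt : p ^ n < d := by
      have h2 : 2 ≤ m := (Nat.two_le_iff m).mpr ⟨hm0, hm1⟩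
      nlinarith [hppos, hdm]
    have hexp : (1 + X : Polynomial (ZMod p)) ^ d
        = Polynomial.expand (ZMod p) (p ^ n) ((1 + X) ^ m) := by
      have h1 : (1 + X : Polynomial (ZMod p)) ^ p ^ n = 1 + X ^ p ^ n := by
        rw [add_pow_char_pow, one_pow]
      rw [map_pow, map_add, map_one, expand_X, ← h1, ← pow_mul, hdm]
    have hc1 : ((1 + X : Polynomial (ZMod p)) ^ d).coeff (p ^ n) = (m : ZMod p) := by
      rw [hexp, Polynomial.coeff_expand hppos]
      rw [if_pos (dvd_refl _), Nat.div_self hppos, coeff_one_add_X_pow, Nat.choose_one_right]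
    have hc2 : ((1 : Polynomial (ZMod p)) + X ^ d).coeff (p ^ n) = 0 := by
      rw [coeff_add, coeff_one, coeff_X_pow, if_neg (by omega), if_neg (Nat.ne_of_lt hlt)]
      ring
    rw [hpoly, hc2] at hc1
    exact hpm ((CharP.cast_eq_zero_iff (ZMod p) p m).mp hc1.symm)
  intro A _ _ a
  rw [hP, hfX, hdn, map_pow, aeval_X]
end

section
/- The center of the category of groups consists of exactly two elements: the identity transformation and the transformation sending every element to the unit. In particular every natural transformation η from the identity functor on Grp to itself satisfies either η_G = id_G for all G, or η_G is the trivial homomorphism for all G. -/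
open CategoryTheory

/-- The (discrete) Heisenberg group, as triples of integers. -/
@[ext] structure Heis : Type where
  a : ℤ
  b : ℤ
  c : ℤ

namespace Heis

instance : Mul Heis := ⟨fun u v => ⟨u.a + v.a, u.b + v.b, u.c + v.c + u.a * v.b⟩⟩
instance : One Heis := ⟨⟨0, 0, 0⟩⟩
instance : Inv Heis := ⟨fun u => ⟨-u.a, -u.b, -u.c + u.a * u.b⟩⟩

@[simp] lemma mul_a (u v : Heis) : (u * v).a = u.a + v.a := rfl
@[simp] lemma mul_b (u v : Heis) : (u * v).b = u.b + v.b := rfl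
@[simp] lemma mul_c (u v : Heis) : (u * v).c = u.c + v.c + u.a * v.b := rfl
@[simp] lemma one_a : (1 : Heis).a = 0 := rfl
@[simp] lemma one_b : (1 : Heis).b = 0 := rfl
@[simp] lemma one_c : (1 : Heis).c = 0 := rfl
@[simp] lemma inv_a (u : Heis) : u⁻¹.a = -u.a := rfl
@[simp] lemma inv_b (u : Heis) : u⁻¹.b = -u.b := rfl
@[simp] lemma inv_c (u : Heis) : u⁻¹.c = -u.c + u.a * u.b := rfl

instance : Group Heis where
  mul_assoc u v w := by ext <;> simp <;> ring
  one_mul u := by ext <;> simp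
  mul_one u := by ext <;> simp
  inv_mul_cancel u := by ext <;> simp

lemma pow_x (a : ℤ) (m : ℕ) : (⟨a, 0, 0⟩ : Heis) ^ m = ⟨m * a, 0, 0⟩ := by
  induction m with
  | zero => ext <;> simp
  | succ k ih => rw [pow_succ, ih]; ext <;> simp <;> push_cast <;> ring_nf

lemma pow_y (b : ℤ) (m : ℕ) : (⟨0, b, 0⟩ : Heis) ^ m = ⟨0, m * b, 0⟩ := by
  induction m with
  | zero => ext <;> simp
  | succ k ih => rw [pow_succ, ih]; ext <;> simp <;> push_cast <;> ring_nf

lemma pow_g (m : ℕ) : ∃ t : ℤ, (⟨1, 1, 1⟩ : Heis) ^ m = ⟨m, m, t⟩ ∧ 2 * t = m * (m + 1) := by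
  induction m with
  | zero => exact ⟨0, by ext <;> simp, by simp⟩
  | succ k ih =>
    obtain ⟨t, ht, h2⟩ := ih
    refine ⟨t + 1 + k, ?_, ?_⟩
    · rw [pow_succ, ht]; ext <;> simp <;> push_cast <;> ring_nf
    · push_cast at h2 ⊢; linear_combination h2

lemma pow_ginv (m : ℕ) :
    ∃ t : ℤ, (⟨-1, -1, 0⟩ : Heis) ^ m = ⟨-m, -m, t⟩ ∧ 2 * t + m = m * m := by
  induction m with
  | zero => exact ⟨0, by ext <;> simp, by simp⟩
  | succ k ih =>
    obtain ⟨t, ht, h2⟩ := ih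
    refine ⟨t + k, ?_, ?_⟩
    · rw [pow_succ, ht]; ext <;> simp <;> push_cast <;> ring_nf
    · push_cast at h2 ⊢; linear_combination h2

end Heis

/-- The center of the category of groups has exactly two elements: every natural
endomorphism of the identity functor on `Grp` is either the identity everywhere
or the trivial homomorphism everywhere. -/
theorem stmt_6 (η : 𝟭 GrpCat.{u} ⟶ 𝟭 GrpCat.{u}) :
    (∀ G : GrpCat.{u}, η.app G = 𝟙 G) ∨ (∀ (G : GrpCat.{u}) (x : G), η.app G x = 1) := by
  set A : GrpCat.{u} := GrpCat.of (ULift.{u} (Multiplicative ℤ)) with hA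
  set n : ℤ := Multiplicative.toAdd (η.app A (ULift.up (Multiplicative.ofAdd (1 : ℤ)))).down
    with hn
  -- the key computation: η is `x ↦ x ^ n` on every group
  have key : ∀ (G : GrpCat.{u}) (x : G), η.app G x = x ^ n := by
    intro G x
    let f : A ⟶ G :=
      GrpCat.ofHom ((zpowersHom G x).comp (MulEquiv.ulift : ULift (Multiplicative ℤ) ≃* _).toMonoidHom)
    have h := congrArg (fun g => g (ULift.up (Multiplicative.ofAdd (1 : ℤ)))) (η.naturality f)
    simp only [Functor.id_map, Functor.id_obj] at h
    have h1 : f (ULift.up (Multiplicative.ofAdd (1 : ℤ))) = x := by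
      show x ^ (1 : ℤ) = x
      exact zpow_one x
    have h2 : f (η.app A (ULift.up (Multiplicative.ofAdd (1 : ℤ)))) = x ^ n := by
      have hup : η.app A (ULift.up (Multiplicative.ofAdd (1 : ℤ)))
          = ULift.up (Multiplicative.ofAdd n) := by
        rw [hn, ofAdd_toAdd]
        rfl
      rw [hup]
      show x ^ n = x ^ n
      rfl
    calc η.app G x = η.app G (f (ULift.up (Multiplicative.ofAdd (1 : ℤ)))) := by rw [h1]
      _ = f (η.app A (ULift.up (Multiplicative.ofAdd (1 : ℤ)))) := by simpa using h
      _ = x ^ n := h2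
  -- now force n = 0 or n = 1 using the Heisenberg group
  have hn01 : n = 0 ∨ n = 1 := by
    set H : GrpCat.{u} := GrpCat.of (ULift.{u} Heis) with hH
    have hφ : ∀ z : ULift.{u} Heis, η.app H z = z ^ n := fun z => key H z
    let φ : ULift.{u} Heis →* ULift.{u} Heis := (η.app H).hom
    have hφ' : ∀ z : ULift.{u} Heis, φ z = z ^ n := hφ
    have e := map_mul φ (ULift.up (⟨1, 0, 0⟩ : Heis)) (ULift.up (⟨0, 1, 0⟩ : Heis))
    rw [hφ', hφ', hφ'] at e
    have hmul : (ULift.up (⟨1, 0, 0⟩ : Heis) * ULift.up (⟨0, 1, 0⟩ : Heis))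
        = ULift.up (⟨1, 1, 1⟩ : Heis) := by
      apply ULift.ext
      show (⟨1, 0, 0⟩ : Heis) * ⟨0, 1, 0⟩ = ⟨1, 1, 1⟩
      ext <;> simp
    rw [hmul] at e
    have down_zpow : ∀ (u : ULift.{u} Heis) (k : ℤ), (u ^ k).down = u.down ^ k := fun u k =>
      map_zpow (MulEquiv.ulift : ULift.{u} Heis ≃* Heis).toMonoidHom u k
    have e' : (⟨1, 1, 1⟩ : Heis) ^ n = (⟨1, 0, 0⟩ : Heis) ^ n * (⟨0, 1, 0⟩ : Heis) ^ n := by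
      have := congrArg ULift.down e
      rwa [down_zpow, show ∀ u v : ULift.{u} Heis, (u * v).down = u.down * v.down from
        fun _ _ => rfl, down_zpow, down_zpow] at this
    obtain ⟨m, hm | hm⟩ := Int.eq_nat_or_neg n
    · -- nonnegative case
      rw [hm] at e' ⊢
      rw [zpow_natCast, zpow_natCast, zpow_natCast] at e'
      obtain ⟨t, ht, h2⟩ := Heis.pow_g m
      rw [ht, Heis.pow_x, Heis.pow_y] at e'
      have hc := congrArg Heis.c e'
      simp at hc
      -- hc : t = (m:ℤ) * 1 * ((m:ℤ) * 1)  (roughly)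
      have hmm : (m : ℤ) * ((m : ℤ) - 1) = 0 := by
        rw [hc] at h2
        linear_combination h2
      rcases mul_eq_zero.mp hmm with h | h
      · left; rw [h]
      · right; rw [sub_eq_zero] at h; rw [h]
    · -- negative case
      rw [hm] at e' ⊢
      simp only [zpow_neg, zpow_natCast, ← inv_pow] at e'
      have i1 : (⟨1, 1, 1⟩ : Heis)⁻¹ = ⟨-1, -1, 0⟩ := by ext <;> simp
      have i2 : (⟨1, 0, 0⟩ : Heis)⁻¹ = ⟨-1, 0, 0⟩ := by ext <;> simp
      have i3 : (⟨0, 1, 0⟩ : Heis)⁻¹ = ⟨0, -1, 0⟩ := by ext <;> simp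
      rw [i1, i2, i3] at e'
      obtain ⟨t, ht, h2⟩ := Heis.pow_ginv m
      rw [ht, Heis.pow_x, Heis.pow_y] at e'
      have hc := congrArg Heis.c e'
      simp at hc
      have hm0 : (m : ℤ) = 0 := by nlinarith [hc, h2, Int.natCast_nonneg m]
      left
      rw [hm0, neg_zero]
  rcases hn01 with h0 | h1
  · right; intro G x; rw [key G x, h0, zpow_zero]
  · left; intro G
    ext x
    rw [key G x, h1, zpow_one]
    rfl
end

section
/- The center of the category of monoids consists of exactly two elements: the identity transformation and the constant-unit transformation. -/
open CategoryTheory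

universe u

lemma aux_pow_le (n : ℕ) (h : 2 ^ n - 1 = n) : n ≤ 1 := by
  rcases n with _ | _ | k
  · omega
  · omega
  · have h1 := Nat.lt_two_pow_self (n := k)
    have h2 : 2 ^ (k + 2) = 4 * 2 ^ k := by ring
    omega

/-- The center of the category of monoids has exactly two elements: every natural
endomorphism of the identity functor on `MonCat` is either the identity everywhere
or the constant-unit homomorphism everywhere. -/
theorem stmt_7 (η : 𝟭 MonCat.{u} ⟶ 𝟭 MonCat.{u}) :
    (∀ M : MonCat.{u}, η.app M = 𝟙 M) ∨
      (∀ (M : MonCat.{u}) (x : M), η.app M x = 1) := by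
  let N : MonCat.{u} := MonCat.of (Multiplicative (ULift.{u} ℕ))
  let g₀ : N := Multiplicative.ofAdd (ULift.up 1)
  let n : ℕ := ((η.app N g₀).toAdd).down
  have key : ∀ (M : MonCat.{u}) (x : M), η.app M x = x ^ n := by
    intro M x
    let φ₀ : Multiplicative (ULift.{u} ℕ) →* M :=
      (powersHom M x).comp (AddMonoidHom.toMultiplicative (AddEquiv.ulift.toAddMonoidHom))
    let φ : N ⟶ M := MonCat.ofHom φ₀
    have hnat := η.naturality φ
    simp only [Functor.id_map] at hnat
    have hel := ConcreteCategory.congr_hom hnat g₀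
    have hel2 : η.app M (φ g₀) = φ (η.app N g₀) := hel
    have hφ1 : φ g₀ = x := pow_one x
    have hφ2 : φ (η.app N g₀) = x ^ n := rfl
    rw [hφ1] at hel2
    rw [hel2, hφ2]
  have hle : n ≤ 1 := by
    let E : MonCat.{u} := MonCat.of (Function.End (ULift.{u} ℕ))
    let f : Function.End (ULift.{u} ℕ) := fun p => ULift.up (p.down + 1)
    let g : Function.End (ULift.{u} ℕ) := fun p => ULift.up (2 * p.down)
    have hm : η.app E (f * g) = η.app E f * η.app E g := map_mul (η.app E).hom f g
    rw [key E (f * g), key E f, key E g] at hm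
    have hfg : ∀ k : ℕ, ((f * g) ^ k : Function.End (ULift.{u} ℕ)) (ULift.up 0)
        = ULift.up (2 ^ k - 1) := by
      intro k
      induction k with
      | zero => rfl
      | succ k ih =>
        have h3 : ((f*g) ^ (k+1) : Function.End _) (ULift.up 0)
            = (f*g) (((f*g) ^ k : Function.End _) (ULift.up 0)) := by
          rw [pow_succ']; rfl
        rw [h3, ih]
        show ULift.up (2 * (2 ^ k - 1) + 1) = _
        have h4 : 1 ≤ 2 ^ k := Nat.one_le_two_pow
        have h5 : 2 ^ (k+1) = 2 * 2 ^ k := by ring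
        congr 1
        omega
    have hgpow : ∀ k : ℕ, (g ^ k : Function.End (ULift.{u} ℕ)) (ULift.up 0) = ULift.up 0 := by
      intro k
      induction k with
      | zero => rfl
      | succ k ih =>
        have h3 : (g ^ (k+1) : Function.End _) (ULift.up 0)
            = g ((g ^ k : Function.End _) (ULift.up 0)) := by
          rw [pow_succ']; rfl
        rw [h3, ih]; rfl
    have hfpow : ∀ k : ℕ, (f ^ k : Function.End (ULift.{u} ℕ)) (ULift.up 0) = ULift.up k := by
      intro k
      induction k with
      | zero => rfl
      | succ k ih =>
        have h3 : (f ^ (k+1) : Function.End _) (ULift.up 0)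
            = f ((f ^ k : Function.End _) (ULift.up 0)) := by
          rw [pow_succ']; rfl
        rw [h3, ih]
    have hev := congrArg (fun u : Function.End (ULift.{u} ℕ) => u (ULift.up 0)) hm
    have h1 : ((f * g) ^ n : Function.End (ULift.{u} ℕ)) (ULift.up 0) = ULift.up (2 ^ n - 1) :=
      hfg n
    have h2 : ((f ^ n * g ^ n : Function.End (ULift.{u} ℕ))) (ULift.up 0) = ULift.up n := by
      show (f ^ n : Function.End _) ((g ^ n : Function.End _) (ULift.up 0)) = _
      rw [hgpow, hfpow]
    rw [h1, h2] at hev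
    exact aux_pow_le n (congrArg ULift.down hev)
  interval_cases hni : n
  · right
    intro M x
    rw [key M x, pow_zero]
  · left
    intro M
    ext x
    rw [key M x, pow_one]
    rfl
end

section
/- (Morita invariance of the center, strict version) For a small category C, whiskering along the Yoneda embedding induces an isomorphism between the center of the presheaf category Presheaf(C) and the center of C: Z(Cᵒᵖ ⥤ Set) ≅ Z(C). -/
open CategoryTheory Opposite

namespace Stmt16

variable {C : Type u} [SmallCategory C]

/-- Restriction of a natural endomorphism of the identity of presheaves to `C`. -/
noncomputable def restr (η : End (𝟭 (Cᵒᵖ ⥤ Type u))) : End (𝟭 C) where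
  app c := yoneda.preimage (η.app (yoneda.obj c))
  naturality c d f := by
    apply yoneda.map_injective
    simp only [Functor.id_map, Functor.map_comp, Functor.map_preimage]
    simpa using (η.naturality (yoneda.map f))

/-- Extension of a natural endomorphism of the identity of `C` to presheaves. -/
def extend (μ : End (𝟭 C)) : End (𝟭 (Cᵒᵖ ⥤ Type u)) where
  app P :=
    { app := fun c => TypeCat.ofHom (fun x => P.map (μ.app c.unop).op x)
      naturality := fun c d f => by
        ext x
        dsimp
        rw [← FunctorToTypes.map_comp_apply, ← FunctorToTypes.map_comp_apply]
        have h : f ≫ (μ.app d.unop).op = (μ.app c.unop).op ≫ f :=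
          Quiver.Hom.unop_inj (by simpa using (μ.naturality f.unop).symm)
        rw [h] }
  naturality P Q α := by
    ext c x
    exact (NatTrans.naturality_apply α _ x).symm

lemma extend_app_yoneda (μ : End (𝟭 C)) (c : C) :
    (extend μ).app (yoneda.obj c) = yoneda.map (μ.app c) := by
  ext d (x : d.unop ⟶ c)
  dsimp [extend]
  simpa using (μ.naturality x).symm

lemma restr_extend (μ : End (𝟭 C)) : restr (extend μ) = μ := by
  apply NatTrans.ext; funext c
  dsimp [restr]
  rw [extend_app_yoneda, yoneda.preimage_map]

lemma extend_restr (η : End (𝟭 (Cᵒᵖ ⥤ Type u))) : extend (restr η) = η := by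
  apply NatTrans.ext; funext P
  apply NatTrans.ext; funext c
  ext (x : P.obj c)
  dsimp [extend, restr]
  have h := types_congr_hom (congrArg (fun (f : yoneda.obj c.unop ⟶ P) => f.app c)
    (η.naturality (yonedaEquiv.symm (show P.obj (op c.unop) from x)))) (𝟙 c.unop)
  have hy : η.app (yoneda.obj c.unop)
      = yoneda.map (yoneda.preimage (η.app (yoneda.obj c.unop))) :=
    (yoneda.map_preimage _).symm
  rw [hy] at h
  simp only [Functor.id_map, FunctorToTypes.comp, yoneda_map_app, Category.id_comp,
    yonedaEquiv_symm_app_apply, op_id, FunctorToTypes.map_id_apply,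
    yonedaEquiv_symm_app, TypeCat.ofHom_apply, Functor.map_id_apply] at h
  exact h.symm

end Stmt16

open Stmt16 in
/-- Morita invariance of the center (strict version): for a small category `C`, the
center of the presheaf category is isomorphic to the center of `C`, via restriction
along the Yoneda embedding. -/
theorem stmt_16 (C : Type u) [SmallCategory C] :
    ∃ e : End (𝟭 (Cᵒᵖ ⥤ Type u)) ≃* End (𝟭 C),
      ∀ (η : End (𝟭 (Cᵒᵖ ⥤ Type u))) (c : C),
        yoneda.map ((e η).app c) = η.app (yoneda.obj c) := by
  refine ⟨{ toFun := restr, invFun := extend,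
            left_inv := extend_restr, right_inv := restr_extend,
            map_mul' := ?_ }, ?_⟩
  · intro η₁ η₂
    show restr (η₁ * η₂) = restr η₁ * restr η₂
    rw [End.mul_def, End.mul_def]
    apply NatTrans.ext; funext c
    apply yoneda.map_injective
    simp [restr]
  · intro η c
    exact yoneda.map_preimage _
end

section
/- If F : C ⥤ D is a dense and fully faithful functor, then the centers of C and D are isomorphic as monoids: Z(C) ≅ Z(D). -/
open CategoryTheory

section aux

variable {C : Type u₁} [Category.{v₁} C] {D : Type u₂} [Category.{v₂} D]
    (F : C ⥤ D)

/-- The extension of `F` along `F` induced by `α : 𝟭 C ⟶ 𝟭 C`. -/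
@[simps]
def extOf (α : 𝟭 C ⟶ 𝟭 C) : F ⟶ F ⋙ 𝟭 D where
  app X := F.map (α.app X)
  naturality X Y f := by
    dsimp
    rw [← F.map_comp, ← F.map_comp]
    congr 1
    exact α.naturality f

lemma ext_of_agree (h : (Functor.LeftExtension.mk (𝟭 D)
      F.rightUnitor.inv).IsPointwiseLeftKanExtension)
    (β β' : 𝟭 D ⟶ 𝟭 D) (hβ : ∀ X : C, β.app (F.obj X) = β'.app (F.obj X)) :
    β = β' := by
  ext d
  refine (h d).hom_ext (fun g => ?_)
  have h1 := β.naturality g.hom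
  have h2 := β'.naturality g.hom
  dsimp at h1 h2 ⊢
  change (𝟙 _ ≫ g.hom) ≫ β.app d = (𝟙 _ ≫ g.hom) ≫ β'.app d
  simp only [Category.id_comp, h1, h2, hβ g.left]

end aux

/-- If `F : C ⥤ D` is dense (the identity of `D` is a pointwise left Kan extension of
`F` along `F`) and fully faithful, then the centers of `C` and `D` are isomorphic as
monoids. -/
theorem stmt_17 {C : Type u₁} [Category.{v₁} C] {D : Type u₂} [Category.{v₂} D]
    (F : C ⥤ D) [F.Full] [F.Faithful]
    (hdense : Nonempty ((Functor.LeftExtension.mk (𝟭 D)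
      F.rightUnitor.inv).IsPointwiseLeftKanExtension)) :
    Nonempty (End (𝟭 C) ≃* End (𝟭 D)) := by
  obtain ⟨h⟩ := hdense
  -- the map `End (𝟭 C) → End (𝟭 D)` obtained from the universal property
  let toD : End (𝟭 C) → End (𝟭 D) := fun α =>
    (h.isUniversal.to (Functor.LeftExtension.mk (𝟭 D) (extOf F α))).right
  have toD_app : ∀ (α : End (𝟭 C)) (X : C),
      (toD α).app (F.obj X) = F.map (α.app X) := by
    intro α X
    have := StructuredArrow.w
      (h.isUniversal.to (Functor.LeftExtension.mk (𝟭 D) (extOf F α)))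
    have := congr_arg (fun (γ : F ⟶ F ⋙ 𝟭 D) => γ.app X) this
    dsimp [toD] at this ⊢
    exact (Category.id_comp _).symm.trans this
  -- the map `End (𝟭 D) → End (𝟭 C)` by restriction
  let toC : End (𝟭 D) → End (𝟭 C) := fun β =>
    { app := fun X => F.preimage (β.app (F.obj X))
      naturality := fun X Y f => by
        apply F.map_injective
        simp only [Functor.map_comp, Functor.map_preimage]
        exact β.naturality (F.map f) }
  have left_inv : ∀ α, toC (toD α) = α := by
    intro α
    refine NatTrans.ext (funext fun X => ?_)
    apply F.map_injective
    simp [toC, toD_app α X]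
  have right_inv : ∀ β, toD (toC β) = β := by
    intro β
    refine ext_of_agree F h _ _ (fun X => ?_)
    rw [toD_app]
    simp [toC]
  refine ⟨{ toFun := toD, invFun := toC, left_inv := left_inv,
            right_inv := right_inv, map_mul' := ?_ }⟩
  intro α α'
  refine ext_of_agree F h _ _ (fun X => ?_)
  rw [toD_app]
  change F.map ((α' ≫ α).app X) = ((toD α') ≫ (toD α)).app (F.obj X)
  simp [toD_app]
end
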